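/- In the setting of Theorem 1 with a common transmit SNR γ_c = γ_r = γ, write P_out(γ) for the outage probability P(max(γ₁,γ₂) < γ_th) + P(γ₁ ≥ γ_th and max(γ₃,γ₂) < γ_th) as a function of γ, and let θ₁* = γ_th/(a_f − a_n·γ_th). Then lim_{γ→∞} γ·P_out(γ) = (θ₁*/β_SDf) · { 1 − [β_SR/(2β_RR(β_SR + β_LI·ω·θ₁*))] · √(πβ_SR/(δ·θ₁*)) · exp(β_SR/(4β_RR²·δ·θ₁*)) · erfc((1/(2β_RR))·√(β_SR/(δ·θ₁*))) }. -/

import Mathlib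

/-!
Write `θ = γ_th/(a_f − a_n γ_th)`. Since `a_n γ_th < a_f`, each SNR event `γ₂ < γ_th`, `γ₃ < γ_th`
is `ρ < θ/γ`, and the SINR event `γ₁ < γ_th` is `ρ_SR < Y + θ/γ` with the interference
`Y = θ(δ V² + ω ρ_LI) ≥ 0`. Independence splits the outage probability as
`P(γ₂ < γ_th) · (P(γ₁ < γ_th) + P(γ₁ ≥ γ_th) P(γ₃ < γ_th))`. Conditioning on `Y`,
`P(ρ_SR < Y + t) = 1 − e^{−t/β_SR} 𝔼[e^{−Y/β_SR}]`, and `𝔼[e^{−Y/β_SR}]` factors into the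
Laplace transform of `ρ_LI` and a Gaussian integral against the law of `V`, which completing the
square turns into `erfc`. As `γ → ∞`, `γ · P(γ₂ < γ_th) → θ/β_SDf`, `P(γ₃ < γ_th) → 0` and
`P(γ₁ < γ_th) → 1 − 𝔼[e^{−Y/β_SR}]`.
-/

open MeasureTheory ProbabilityTheory Real Filter

/-- The complementary error function `erfc(z) = (2/√π)·∫_z^∞ exp(−t²) dt`. -/
noncomputable def erfc (z : ℝ) : ℝ :=
  2 / Real.sqrt π * ∫ t in Set.Ioi z, Real.exp (-t ^ 2)

open Set Topology

lemma tendsto_mul_one_sub_exp_neg_div_atTop (k : ℝ) :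
    Tendsto (fun g : ℝ => g * (1 - exp (-(k / g)))) atTop (𝓝 k) := by
  have hderiv : HasDerivAt (fun u => 1 - exp (-(k * u))) k 0 := by
    simpa using ((hasDerivAt_id (0 : ℝ)).const_mul k).neg.exp.const_sub 1
  refine (hderiv.tendsto_slope_zero_right.comp tendsto_inv_atTop_nhdsGT_zero).congr' ?_
  filter_upwards [eventually_ne_atTop 0] with g hg
  simp [div_eq_mul_inv]

lemma tendsto_exp_neg_div_atTop (k : ℝ) : Tendsto (fun g : ℝ => exp (-(k / g))) atTop (𝓝 1) := by
  simpa using ((tendsto_const_nhds (x := k)).div_atTop tendsto_id).neg.rexp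

lemma tendsto_mul_selection_outage (k₁ k₂ k₃ M : ℝ) :
    Tendsto (fun g : ℝ => g * ((1 - exp (-(k₂ / g)))
      * ((1 - exp (-(k₁ / g)) * M) + (1 - (1 - exp (-(k₁ / g)) * M)) * (1 - exp (-(k₃ / g))))))
      atTop (𝓝 (k₂ * (1 - M))) := by
  have hq : Tendsto (fun g : ℝ => 1 - exp (-(k₁ / g)) * M) atTop (𝓝 (1 - 1 * M)) :=
    tendsto_const_nhds.sub ((tendsto_exp_neg_div_atTop k₁).mul_const M)
  have h := (tendsto_mul_one_sub_exp_neg_div_atTop k₂).mul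
    (hq.add (((tendsto_const_nhds (x := 1)).sub hq).mul
      ((tendsto_const_nhds (x := 1)).sub (tendsto_exp_neg_div_atTop k₃))))
  rw [show k₂ * (1 - 1 * M + (1 - (1 - 1 * M)) * (1 - 1)) = k₂ * (1 - M) by ring] at h
  exact h.congr fun g => by ring

lemma integral_Ioi_exp_neg_sq_mul_add {a : ℝ} (ha : 0 < a) (d : ℝ) :
    ∫ x in Ioi 0, exp (-(a * x + d) ^ 2) = √π / (2 * a) * erfc d := by
  have hshift : ∫ x in Ioi 0, exp (-(x + d) ^ 2) = ∫ x in Ioi d, exp (-x ^ 2) := by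
    simpa using (measurePreserving_add_right volume d).setIntegral_preimage_emb
      (measurableEmbedding_addRight d) (fun x => exp (-x ^ 2)) (Ioi (0 + d))
  have hscale := integral_comp_mul_left_Ioi (fun x => exp (-(x + d) ^ 2)) 0 ha
  simp only [mul_zero, smul_eq_mul] at hscale
  rw [hscale, hshift, erfc]
  field_simp

lemma expMeasure_Iio {r s : ℝ} (hr : 0 < r) (hs : 0 ≤ s) :
    expMeasure r (Iio s) = ENNReal.ofReal (1 - exp (-(r * s))) := by
  rw [show expMeasure r = volume.withDensity (exponentialPDF r) from rfl,
    withDensity_apply _ measurableSet_Iio, setLIntegral_congr Iio_ae_eq_Iic,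
    lintegral_exponentialPDF_eq_antiDeriv hr s, if_pos hs]

lemma ae_nonneg_expMeasure (r : ℝ) : ∀ᵐ x ∂expMeasure r, 0 ≤ x := by
  have h : expMeasure r (Iio 0) = 0 := by
    rw [show expMeasure r = volume.withDensity (exponentialPDF r) from rfl,
      withDensity_apply _ measurableSet_Iio]
    exact lintegral_exponentialPDF_of_nonpos le_rfl
  exact ae_iff.2 (measure_mono_null (fun x hx => not_le.1 hx) h)

lemma integral_expMeasure {r : ℝ} (hr : 0 < r) (f : ℝ → ℝ) :
    ∫ x, f x ∂expMeasure r = ∫ x in Ioi 0, r * exp (-(r * x)) * f x := by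
  have hmeas : Measurable (exponentialPDF r) := (measurable_exponentialPDFReal r).ennreal_ofReal
  have hpdf : ∀ x, (exponentialPDF r x).toReal • f x
      = (Ici 0).indicator (fun x => r * exp (-(r * x)) * f x) x := by
    intro x
    by_cases hx : 0 ≤ x <;> simp [exponentialPDF_eq, hx, hr.le, (exp_pos _).le]
  rw [show expMeasure r = volume.withDensity (exponentialPDF r) from rfl,
    integral_withDensity_eq_integral_toReal_smul hmeas (ae_of_all _ fun _ => ENNReal.ofReal_lt_top)]
  simp_rw [hpdf]
  rw [integral_indicator measurableSet_Ici, integral_Ici_eq_integral_Ioi]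

lemma integral_exp_neg_mul_expMeasure {r b : ℝ} (hr : 0 < r) (hrb : 0 < r + b) :
    ∫ x, exp (-(b * x)) ∂expMeasure r = r / (r + b) := by
  rw [integral_expMeasure hr]
  simp_rw [mul_assoc, ← exp_add, show ∀ x, -(r * x) + -(b * x) = -(r + b) * x by intro; ring]
  rw [integral_const_mul, integral_exp_mul_Ioi (by linarith), mul_zero, exp_zero]
  field_simp

lemma integral_exp_neg_mul_sq_expMeasure {r c : ℝ} (hr : 0 < r) (hc : 0 < c) :
    ∫ x, exp (-(c * x ^ 2)) ∂expMeasure r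
      = r / 2 * √(π / c) * exp (r ^ 2 / (4 * c)) * erfc (r / (2 * √c)) := by
  have hsc : 0 < √c := sqrt_pos.2 hc
  have hsquare : ∀ x, r * exp (-(r * x)) * exp (-(c * x ^ 2))
      = r * exp (r ^ 2 / (4 * c)) * exp (-(√c * x + r / (2 * √c)) ^ 2) := by
    intro x
    rw [mul_assoc, mul_assoc, ← exp_add, ← exp_add]
    congr 2
    field_simp
    rw [sq_sqrt hc.le]
    ring
  rw [integral_expMeasure hr]
  simp_rw [hsquare]
  rw [integral_const_mul, integral_Ioi_exp_neg_sq_mul_add hsc, sqrt_div' _ hc.le]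
  field_simp

lemma integrable_exp_neg_mul_of_ae_nonneg {ν : Measure ℝ} [IsFiniteMeasure ν]
    (hν : ∀ᵐ y ∂ν, 0 ≤ y) {r : ℝ} (hr : 0 ≤ r) : Integrable (fun y => exp (-(r * y))) ν := by
  refine (integrable_const 1).mono' (by fun_prop) ?_
  filter_upwards [hν] with y hy
  rw [norm_of_nonneg (exp_pos _).le, exp_le_one_iff, neg_nonpos]
  positivity

lemma toReal_lintegral_expMeasure_Iio_add {ν : Measure ℝ} [IsProbabilityMeasure ν]
    (hν : ∀ᵐ y ∂ν, 0 ≤ y) {r t : ℝ} (hr : 0 < r) (ht : 0 ≤ t) :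
    (∫⁻ y, expMeasure r (Iio (y + t)) ∂ν).toReal
      = 1 - exp (-(r * t)) * ∫ y, exp (-(r * y)) ∂ν := by
  have hsplit : ∀ y, 1 - exp (-(r * (y + t))) = 1 - exp (-(r * t)) * exp (-(r * y)) := by
    intro y
    rw [← exp_add]
    ring_nf
  have hint_exp : Integrable (fun y => exp (-(r * t)) * exp (-(r * y))) ν :=
    (integrable_exp_neg_mul_of_ae_nonneg hν hr.le).const_mul _
  have hint : Integrable (fun y => 1 - exp (-(r * t)) * exp (-(r * y))) ν :=
    (integrable_const 1).sub hint_exp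
  have hnonneg : 0 ≤ᵐ[ν] fun y => 1 - exp (-(r * t)) * exp (-(r * y)) := by
    filter_upwards [hν] with y hy
    rw [Pi.zero_apply, ← hsplit, sub_nonneg, exp_le_one_iff, neg_nonpos]
    positivity
  have hcdf : ∀ᵐ y ∂ν, expMeasure r (Iio (y + t))
      = ENNReal.ofReal (1 - exp (-(r * t)) * exp (-(r * y))) := by
    filter_upwards [hν] with y hy
    rw [expMeasure_Iio hr (by positivity), hsplit]
  rw [lintegral_congr_ae hcdf, ← ofReal_integral_eq_lintegral_ofReal hint hnonneg,
    ENNReal.toReal_ofReal (integral_nonneg_of_ae hnonneg),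
    integral_sub (integrable_const 1) hint_exp, integral_const_mul]
  simp

noncomputable def farThreshold (an af γth : ℝ) : ℝ := γth / (af - an * γth)

noncomputable def farSNR (an af g ρ : ℝ) : ℝ := af * ρ * g / (an * ρ * g + 1)

/-- `γ₁` as a function of `q = (ρ_SR, ρ_LI, V)`, with residual self-interference `ρ_RR = V²`. -/
noncomputable def farSINR (an af δ w g : ℝ) (q : ℝ × ℝ × ℝ) : ℝ :=
  af * q.1 * g / (an * q.1 * g + q.2.2 ^ 2 * δ * g + q.2.1 * w * g + 1)

section SignalToNoise

variable {an af δ w γth g : ℝ}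

lemma measurable_farSNR : Measurable (farSNR an af g) := by
  unfold farSNR
  fun_prop

lemma measurable_farSINR : Measurable (farSINR an af δ w g) := by
  unfold farSINR
  fun_prop

lemma mul_div_add_lt_iff {a b c x I : ℝ} (hb : 0 ≤ b) (hx : 0 ≤ x) (hI : 0 < I)
    (hc : b * c < a) : a * x / (b * x + I) < c ↔ x < c / (a - b * c) * I := by
  rw [div_lt_iff₀ (by positivity), div_mul_eq_mul_div, lt_div_iff₀ (sub_pos.2 hc)]
  constructor <;> intro h <;> linarith

lemma farSNR_lt_iff {ρ : ℝ} (han : 0 ≤ an) (hdec : an * γth < af) (hg : 0 < g) (hρ : 0 ≤ ρ) :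
    farSNR an af g ρ < γth ↔ ρ < farThreshold an af γth / g := by
  rw [farSNR, farThreshold, mul_assoc, mul_assoc,
    mul_div_add_lt_iff han (by positivity) one_pos hdec, mul_one, lt_div_iff₀ hg]

lemma farSINR_lt_iff {q : ℝ × ℝ × ℝ} (han : 0 ≤ an) (hdec : an * γth < af) (hδ : 0 ≤ δ)
    (hw : 0 ≤ w) (hg : 0 < g) (hρ : 0 ≤ q.1) (hl : 0 ≤ q.2.1) :
    farSINR an af δ w g q < γth ↔
      q.1 < farThreshold an af γth * (δ * q.2.2 ^ 2 + w * q.2.1) + farThreshold an af γth / g := by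
  rw [farSINR, farThreshold, mul_assoc, mul_assoc an, add_assoc, add_assoc,
    mul_div_add_lt_iff han (by positivity) (by positivity) hdec, ← lt_div_iff₀ hg]
  congr! 1
  field_simp
  ring

end SignalToNoise

section RandomVariables

variable {Ω : Type*} [MeasurableSpace Ω] {P : Measure Ω}

lemma ProbabilityTheory.iIndepFun.indepFun_prodMk₃_prodMk {ι β : Type*} [DecidableEq ι]
    [MeasurableSpace β] {X : ι → Ω → β} (h : iIndepFun X P) (hX : ∀ i, Measurable (X i))
    (i j k l m : ι) (hil : i ≠ l) (him : i ≠ m) (hjl : j ≠ l) (hjm : j ≠ m) (hkl : k ≠ l)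
    (hkm : k ≠ m) :
    IndepFun (fun ω => (X i ω, X j ω, X k ω)) (fun ω => (X l ω, X m ω)) P := by
  have hST : Disjoint ({i, j, k} : Finset ι) {l, m} := by
    simp [hil.symm, him.symm, hjl.symm, hjm.symm, hkl.symm, hkm.symm]
  exact (h.indepFun_finset _ _ hST hX).comp
    (φ := fun p : ({i, j, k} : Finset ι) → β => (p ⟨i, by simp⟩, p ⟨j, by simp⟩, p ⟨k, by simp⟩))
    (ψ := fun p : ({l, m} : Finset ι) → β => (p ⟨l, by simp⟩, p ⟨m, by simp⟩))
    (by fun_prop) (by fun_prop)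

lemma ProbabilityTheory.IndepFun.measureReal_inter_preimage_eq_mul {α β : Type*}
    [MeasurableSpace α] [MeasurableSpace β] {X : Ω → α} {Y : Ω → β} (h : IndepFun X Y P)
    {s : Set α} {t : Set β} (hs : MeasurableSet s) (ht : MeasurableSet t) :
    P.real (X ⁻¹' s ∩ Y ⁻¹' t) = P.real (X ⁻¹' s) * P.real (Y ⁻¹' t) := by
  simp [measureReal_def, h.measure_inter_preimage_eq_mul _ _ hs ht]

lemma measureReal_inter_add_measureReal_compl_inter [IsProbabilityMeasure P]
    {α β γ : Type*} [MeasurableSpace α] [MeasurableSpace β] [MeasurableSpace γ]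
    {Z : Ω → α} {X : Ω → β} {W : Ω → γ} (hZm : Measurable Z)
    (hZ : IndepFun Z (fun ω => (X ω, W ω)) P) (hXW : IndepFun X W P)
    {S : Set α} {T : Set β} {U : Set γ} (hS : MeasurableSet S) (hT : MeasurableSet T)
    (hU : MeasurableSet U) :
    P.real (Z ⁻¹' S ∩ W ⁻¹' U) + P.real (Z ⁻¹' Sᶜ ∩ (X ⁻¹' T ∩ W ⁻¹' U))
      = P.real (W ⁻¹' U) * (P.real (Z ⁻¹' S) + (1 - P.real (Z ⁻¹' S)) * P.real (X ⁻¹' T)) := by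
  have hZW : P.real (Z ⁻¹' S ∩ W ⁻¹' U) = P.real (Z ⁻¹' S) * P.real (W ⁻¹' U) :=
    (hZ.comp measurable_id measurable_snd).measureReal_inter_preimage_eq_mul hS hU
  have hZXW : P.real (Z ⁻¹' Sᶜ ∩ (X ⁻¹' T ∩ W ⁻¹' U))
      = P.real (Z ⁻¹' Sᶜ) * P.real (X ⁻¹' T ∩ W ⁻¹' U) :=
    hZ.measureReal_inter_preimage_eq_mul hS.compl (hT.prod hU)
  rw [hZW, hZXW, hXW.measureReal_inter_preimage_eq_mul hT hU, preimage_compl,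
    probReal_compl_eq_one_sub (hZm hS)]
  ring

lemma ae_nonneg_of_map_eq_expMeasure {X : Ω → ℝ} {r : ℝ} (hX : Measurable X)
    (hlaw : P.map X = expMeasure r) : ∀ᵐ ω ∂P, 0 ≤ X ω :=
  ae_of_ae_map hX.aemeasurable (hlaw ▸ ae_nonneg_expMeasure r)

lemma measure_lt_add_of_indepFun [IsFiniteMeasure P] {X Y : Ω → ℝ} (hX : Measurable X)
    (hY : Measurable Y) (hYX : IndepFun Y X P) (t : ℝ) :
    P {ω | X ω < Y ω + t} = ∫⁻ y, P.map X (Iio (y + t)) ∂P.map Y := by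
  have hS : MeasurableSet {p : ℝ × ℝ | p.2 < p.1 + t} :=
    measurableSet_lt measurable_snd (measurable_fst.add_const t)
  change P ((fun ω => (Y ω, X ω)) ⁻¹' {p : ℝ × ℝ | p.2 < p.1 + t}) = _
  rw [← Measure.map_apply (hY.prodMk hX) hS,
    (indepFun_iff_map_prod_eq_prod_map_map hY.aemeasurable hX.aemeasurable).1 hYX,
    Measure.prod_apply hS]
  rfl

lemma measureReal_lt_add_of_indepFun_expMeasure [IsProbabilityMeasure P] {X Y : Ω → ℝ}
    {r t : ℝ} (hX : Measurable X) (hY : Measurable Y) (hYX : IndepFun Y X P)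
    (hlaw : P.map X = expMeasure r) (hr : 0 < r) (hY0 : ∀ᵐ ω ∂P, 0 ≤ Y ω) (ht : 0 ≤ t) :
    P.real {ω | X ω < Y ω + t} = 1 - exp (-(r * t)) * ∫ ω, exp (-(r * Y ω)) ∂P := by
  have := Measure.isProbabilityMeasure_map (μ := P) hY.aemeasurable
  have hν : ∀ᵐ y ∂P.map Y, 0 ≤ y := (ae_map_iff hY.aemeasurable measurableSet_Ici).2 hY0
  rw [measureReal_def, measure_lt_add_of_indepFun hX hY hYX, hlaw,
    toReal_lintegral_expMeasure_Iio_add hν hr ht, integral_map hY.aemeasurable (by fun_prop)]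

lemma integral_exp_neg_mul_sq_add_mul_of_indepFun {V L : Ω → ℝ} {rV rL c b : ℝ}
    (hV : Measurable V) (hL : Measurable L) (hVL : IndepFun V L P)
    (hlawV : P.map V = expMeasure rV) (hlawL : P.map L = expMeasure rL)
    (hrV : 0 < rV) (hrL : 0 < rL) (hc : 0 < c) (hb : 0 ≤ b) :
    ∫ ω, exp (-(c * V ω ^ 2 + b * L ω)) ∂P
      = rV / 2 * √(π / c) * exp (rV ^ 2 / (4 * c)) * erfc (rV / (2 * √c)) * (rL / (rL + b)) := by
  have hfV : Measurable fun x : ℝ => exp (-(c * x ^ 2)) := by fun_prop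
  have hfL : Measurable fun x : ℝ => exp (-(b * x)) := by fun_prop
  have hprod := (hVL.comp hfV hfL).integral_mul_eq_mul_integral
    (hfV.comp hV).aestronglyMeasurable (hfL.comp hL).aestronglyMeasurable
  simp only [Pi.mul_apply, Function.comp_apply, ← exp_add, ← neg_add] at hprod
  rw [hprod, ← integral_map hV.aemeasurable hfV.aestronglyMeasurable,
    ← integral_map hL.aemeasurable hfL.aestronglyMeasurable, hlawV, hlawL,
    integral_exp_neg_mul_sq_expMeasure hrV hc, integral_exp_neg_mul_expMeasure hrL (by linarith)]

variable {an af δ w γth g r : ℝ}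

lemma measureReal_farSNR_lt {X : Ω → ℝ} (hX : Measurable X) (hlaw : P.map X = expMeasure r)
    (hr : 0 < r) (han : 0 ≤ an) (hdec : an * γth < af) (hγth : 0 ≤ γth) (hg : 0 < g) :
    P.real (X ⁻¹' {ρ | farSNR an af g ρ < γth})
      = 1 - exp (-(r * farThreshold an af γth / g)) := by
  have hθ : 0 ≤ farThreshold an af γth := div_nonneg hγth (sub_pos.2 hdec).le
  have hevent : X ⁻¹' {ρ | farSNR an af g ρ < γth}
      =ᵐ[P] X ⁻¹' Iio (farThreshold an af γth / g) := by
    filter_upwards [ae_nonneg_of_map_eq_expMeasure hX hlaw] with ω hω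
    exact propext (farSNR_lt_iff han hdec hg hω)
  rw [measureReal_congr hevent, measureReal_def, ← Measure.map_apply hX measurableSet_Iio, hlaw,
    expMeasure_Iio hr (by positivity), ENNReal.toReal_ofReal, mul_div_assoc]
  rw [sub_nonneg, exp_le_one_iff, neg_nonpos]
  positivity

lemma measureReal_farSINR_lt {X L V : Ω → ℝ} [IsProbabilityMeasure P] (hX : Measurable X)
    (hL : Measurable L) (hV : Measurable V) (hLVX : IndepFun (fun ω => (L ω, V ω)) X P)
    (hlaw : P.map X = expMeasure r) (hL0 : ∀ᵐ ω ∂P, 0 ≤ L ω) (hr : 0 < r) (han : 0 ≤ an)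
    (hdec : an * γth < af) (hγth : 0 ≤ γth) (hδ : 0 ≤ δ) (hw : 0 ≤ w) (hg : 0 < g) :
    P.real ((fun ω => (X ω, L ω, V ω)) ⁻¹' {q | farSINR an af δ w g q < γth})
      = 1 - exp (-(r * farThreshold an af γth / g))
        * ∫ ω, exp (-(r * farThreshold an af γth * δ * V ω ^ 2
          + r * farThreshold an af γth * w * L ω)) ∂P := by
  set θ := farThreshold an af γth
  have hθ : 0 ≤ θ := div_nonneg hγth (sub_pos.2 hdec).le
  set Y := fun ω => θ * (δ * V ω ^ 2 + w * L ω)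
  have hevent : (fun ω => (X ω, L ω, V ω)) ⁻¹' {q | farSINR an af δ w g q < γth}
      =ᵐ[P] {ω | X ω < Y ω + θ / g} := by
    filter_upwards [ae_nonneg_of_map_eq_expMeasure hX hlaw, hL0] with ω hX0 hL0
    exact propext (farSINR_lt_iff han hdec hδ hw hg hX0 hL0)
  have hY0 : ∀ᵐ ω ∂P, 0 ≤ Y ω := by
    filter_upwards [hL0] with ω hω
    positivity
  have hYX : IndepFun Y X P :=
    hLVX.comp (φ := fun p : ℝ × ℝ => θ * (δ * p.2 ^ 2 + w * p.1)) (by fun_prop) measurable_id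
  rw [measureReal_congr hevent, measureReal_lt_add_of_indepFun_expMeasure hX (by fun_prop) hYX
    hlaw hr hY0 (by positivity), mul_div_assoc]
  congr 3 with ω
  simp only [Y]
  ring_nf

theorem measureReal_farOutage_eq [IsProbabilityMeasure P] {X B C L V : Ω → ℝ} {rX rB rC : ℝ}
    (hX : Measurable X) (hB : Measurable B) (hC : Measurable C) (hL : Measurable L)
    (hV : Measurable V) (hindep : iIndepFun ![X, B, C, L, V] P)
    (hlawX : P.map X = expMeasure rX) (hlawB : P.map B = expMeasure rB)
    (hlawC : P.map C = expMeasure rC) (hL0 : ∀ᵐ ω ∂P, 0 ≤ L ω) (hrX : 0 < rX) (hrB : 0 < rB)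
    (hrC : 0 < rC) (han : 0 ≤ an) (hdec : an * γth < af) (hγth : 0 ≤ γth) (hδ : 0 ≤ δ)
    (hw : 0 ≤ w) (hg : 0 < g) :
    P.real ((fun ω => (X ω, L ω, V ω)) ⁻¹' {q | farSINR an af δ w g q < γth}
        ∩ B ⁻¹' {ρ | farSNR an af g ρ < γth})
      + P.real ((fun ω => (X ω, L ω, V ω)) ⁻¹' {q | farSINR an af δ w g q < γth}ᶜ
        ∩ (C ⁻¹' {ρ | farSNR an af g ρ < γth} ∩ B ⁻¹' {ρ | farSNR an af g ρ < γth}))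
    = (1 - exp (-(rB * farThreshold an af γth / g)))
      * ((1 - exp (-(rX * farThreshold an af γth / g))
          * ∫ ω, exp (-(rX * farThreshold an af γth * δ * V ω ^ 2
            + rX * farThreshold an af γth * w * L ω)) ∂P)
        + (1 - (1 - exp (-(rX * farThreshold an af γth / g))
          * ∫ ω, exp (-(rX * farThreshold an af γth * δ * V ω ^ 2
            + rX * farThreshold an af γth * w * L ω)) ∂P))
          * (1 - exp (-(rC * farThreshold an af γth / g)))) := by
  have hmeas : ∀ i, Measurable (![X, B, C, L, V] i) := by
    intro i
    fin_cases i <;> assumption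
  have hZ : IndepFun (fun ω => (X ω, L ω, V ω)) (fun ω => (C ω, B ω)) P :=
    hindep.indepFun_prodMk₃_prodMk hmeas 0 3 4 2 1 (by decide) (by decide) (by decide)
      (by decide) (by decide) (by decide)
  have hLV : IndepFun (fun ω => (L ω, V ω)) X P :=
    hindep.indepFun_prodMk hmeas 3 4 0 (by decide) (by decide)
  rw [measureReal_inter_add_measureReal_compl_inter (hX.prodMk (hL.prodMk hV)) hZ
      (hindep.indepFun (by decide : (2 : Fin 5) ≠ 1))
      (measurableSet_lt measurable_farSINR measurable_const)
      (measurableSet_lt measurable_farSNR measurable_const)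
      (measurableSet_lt measurable_farSNR measurable_const),
    measureReal_farSNR_lt hB hlawB hrB han hdec hγth hg,
    measureReal_farSNR_lt hC hlawC hrC han hdec hγth hg,
    measureReal_farSINR_lt hX hL hV hLV hlawX hL0 hrX han hdec hγth hδ hw hg]

end RandomVariables

theorem asymptotic_outage_far_device_general
    {Ω : Type*} [MeasurableSpace Ω] (P : Measure Ω) [IsProbabilityMeasure P]
    (βSR βRR βLI βSDf βRDf : ℝ)
    (hβSR : 0 < βSR) (hβRR : 0 < βRR) (hβLI : 0 < βLI) (hβSDf : 0 < βSDf) (hβRDf : 0 < βRDf)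
    (rSR rSDf rRDf rLI V : Ω → ℝ)
    (hrSR : Measurable rSR) (hrSDf : Measurable rSDf) (hrRDf : Measurable rRDf)
    (hrLI : Measurable rLI) (hV : Measurable V)
    (hlawSR : Measure.map rSR P = expMeasure (1 / βSR))
    (hlawSDf : Measure.map rSDf P = expMeasure (1 / βSDf))
    (hlawRDf : Measure.map rRDf P = expMeasure (1 / βRDf))
    (hlawLI : Measure.map rLI P = expMeasure (1 / βLI))
    (hlawV : Measure.map V P = expMeasure (1 / βRR))
    (hindep : iIndepFun ![rSR, rSDf, rRDf, rLI, V] P)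
    (δ w an af γth : ℝ)
    (hδ : δ ∈ Set.Ioc (0 : ℝ) 1) (hw : w = 0 ∨ w = 1)
    (han : 0 < an)
    (hγth : 0 < γth) (hdec : an * γth < af)
    (θ₁s : ℝ) (hθ₁s : θ₁s = γth / (af - an * γth))
    (Pout : ℝ → ℝ)
    (hPout : ∀ g : ℝ,
      Pout g =
        (P {ω | max (af * rSR ω * g /
                    (an * rSR ω * g + (V ω) ^ 2 * δ * g + rLI ω * w * g + 1))
                 (af * rSDf ω * g / (an * rSDf ω * g + 1)) < γth}).toReal
        + (P {ω | γth ≤ af * rSR ω * g /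
                    (an * rSR ω * g + (V ω) ^ 2 * δ * g + rLI ω * w * g + 1)
               ∧ max (af * rRDf ω * g / (an * rRDf ω * g + 1))
                     (af * rSDf ω * g / (an * rSDf ω * g + 1)) < γth}).toReal) :
    Tendsto (fun g : ℝ => g * Pout g) atTop
      (nhds (θ₁s / βSDf
        * (1 - βSR / (2 * βRR * (βSR + βLI * w * θ₁s))
            * Real.sqrt (π * βSR / (δ * θ₁s))
            * Real.exp (βSR / (4 * βRR ^ 2 * δ * θ₁s))
            * erfc (1 / (2 * βRR) * Real.sqrt (βSR / (δ * θ₁s)))))) := by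
  obtain ⟨hδ, -⟩ := hδ
  obtain rfl : θ₁s = farThreshold an af γth := hθ₁s
  have hθ : 0 < farThreshold an af γth := div_pos hγth (sub_pos.2 hdec)
  have hw : 0 ≤ w := by rcases hw with rfl | rfl <;> norm_num
  set θ := farThreshold an af γth
  have hM := integral_exp_neg_mul_sq_add_mul_of_indepFun (c := 1 / βSR * θ * δ)
    (b := 1 / βSR * θ * w) hV hrLI (hindep.indepFun (by decide : (4 : Fin 5) ≠ 3)) hlawV hlawLI
    (by positivity) (by positivity) (by positivity) (by positivity)
  set M := ∫ ω, exp (-(1 / βSR * θ * δ * V ω ^ 2 + 1 / βSR * θ * w * rLI ω)) ∂P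
  simp only [max_lt_iff, ← not_lt] at hPout
  convert (tendsto_mul_selection_outage (1 / βSR * θ) (1 / βSDf * θ) (1 / βRDf * θ) M).congr'
    ?_ using 2
  · rw [hM, show 1 / βSR * θ * δ = (βSR / (δ * θ))⁻¹ by field_simp, sqrt_inv]
    field_simp
  · filter_upwards [eventually_gt_atTop 0] with g hg
    rw [hPout g]
    -- with `max` unfolded, the events of `hPout` are definitionally those of the lemma
    exact congrArg (g * ·) (measureReal_farOutage_eq hrSR hrSDf hrRDf hrLI hV hindep hlawSR hlawSDf
      hlawRDf (ae_nonneg_of_map_eq_expMeasure hrLI hlawLI) (by positivity) (by positivity)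
      (by positivity) han.le hdec hγth.le hδ.le hw hg).symm

/-- **Corollary 1 (precise limit form): asymptotic outage probability of the far IoT
device at high SNR**, with common transmit SNR `γ_c = γ_r = g → ∞`. -/
theorem asymptotic_outage_far_device
    {Ω : Type*} [MeasurableSpace Ω] (P : Measure Ω) [IsProbabilityMeasure P]
    (βSR βRR βLI βSDf βRDf : ℝ)
    (hβSR : 0 < βSR) (hβRR : 0 < βRR) (hβLI : 0 < βLI) (hβSDf : 0 < βSDf) (hβRDf : 0 < βRDf)
    (rSR rSDf rRDf rLI V : Ω → ℝ)
    (hrSR : Measurable rSR) (hrSDf : Measurable rSDf) (hrRDf : Measurable rRDf)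
    (hrLI : Measurable rLI) (hV : Measurable V)
    (hlawSR : Measure.map rSR P = expMeasure (1 / βSR))
    (hlawSDf : Measure.map rSDf P = expMeasure (1 / βSDf))
    (hlawRDf : Measure.map rRDf P = expMeasure (1 / βRDf))
    (hlawLI : Measure.map rLI P = expMeasure (1 / βLI))
    (hlawV : Measure.map V P = expMeasure (1 / βRR))
    (hindep : iIndepFun ![rSR, rSDf, rRDf, rLI, V] P)
    (δ w an af γth : ℝ)
    (hδ : δ ∈ Set.Ioc (0 : ℝ) 1) (hw : w = 0 ∨ w = 1)
    (han : 0 < an) (hanf : an < af) (hsum : an + af = 1)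
    (hγth : 0 < γth) (hdec : an * γth < af)
    (θ₁s : ℝ) (hθ₁s : θ₁s = γth / (af - an * γth))
    (Pout : ℝ → ℝ)
    (hPout : ∀ g : ℝ,
      Pout g =
        (P {ω | max (af * rSR ω * g /
                    (an * rSR ω * g + (V ω) ^ 2 * δ * g + rLI ω * w * g + 1))
                 (af * rSDf ω * g / (an * rSDf ω * g + 1)) < γth}).toReal
        + (P {ω | γth ≤ af * rSR ω * g /
                    (an * rSR ω * g + (V ω) ^ 2 * δ * g + rLI ω * w * g + 1)
               ∧ max (af * rRDf ω * g / (an * rRDf ω * g + 1))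
                     (af * rSDf ω * g / (an * rSDf ω * g + 1)) < γth}).toReal) :
    Tendsto (fun g : ℝ => g * Pout g) atTop
      (nhds (θ₁s / βSDf
        * (1 - βSR / (2 * βRR * (βSR + βLI * w * θ₁s))
            * Real.sqrt (π * βSR / (δ * θ₁s))
            * Real.exp (βSR / (4 * βRR ^ 2 * δ * θ₁s))
            * erfc (1 / (2 * βRR) * Real.sqrt (βSR / (δ * θ₁s)))))) :=
  asymptotic_outage_far_device_general P βSR βRR βLI βSDf βRDf hβSR hβRR hβLI hβSDf hβRDf rSR rSDf
    rRDf rLI V hrSR hrSDf hrRDf hrLI hV hlawSR hlawSDf hlawRDf hlawLI hlawV hindep δ w an af γth hδ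
    hw han hγth hdec θ₁s hθ₁s Pout hPout
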